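/- Let k be a field of characteristic 0 and d ≥ 2. The apolar ideal per_d^⊥ ⊆ k[y_{1,1},…,y_{d,d}] of the generic d×d permanent per_d is generated by the following quadrics: (1) y_{i,j}² for all 1 ≤ i,j ≤ d; (2) y_{i,j₁} y_{i,j₂} for all i and j₁ ≠ j₂ (products of two entries from the same row); (3) y_{i₁,j} y_{i₂,j} for all j and i₁ ≠ i₂ (products of two entries from the same column); and (4) y_{i,j} y_{k,l} − y_{i,l} y_{k,j} for all i ≠ k, j ≠ l (determinants of 2×2 submatrices of Y = (y_{i,j})). -/

import Mathlib

/-!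
A monomial `y^a` acts on `per_d` through the coefficients of `per_d` at the exponents `c + a`, and
these are the 0/1 exponents of permutation matrices. Hence `y^a ∘ per_d = 0` unless `a` is a rook
placement `S` (no two cells in a row or column), which disposes of the squares and of the row and
column products; and the coefficient of a rook placement `x^T` in `y^S ∘ per_d` is `1` if `T`
occupies exactly the rows and columns that `S` misses, and `0` otherwise. This depends on `S` only
through its rows and columns, so the `2 × 2` minors are apolar as well.

Conversely, modulo the quadrics every monomial is either `0` or a rook placement `y^S`, and the
class of `y^S` depends only on the rows `R` and columns `C` of `S`, since a minor exchanges the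
columns of two rooks. So `θ` is congruent to `∑ c_{R,C} y^{S_{R,C}}`, where `c_{R,C}` is the sum of
the coefficients of `θ` at the rook placements with rows `R` and columns `C`. By the pairing above,
`c_{R,C}` is the coefficient of `θ ∘ per_d` at a rook placement on the complementary rows and
columns, so all of them vanish when `θ ∘ per_d = 0`.
-/

open MvPolynomial

/-- The generic d×d permanent, a form of degree `d` in the `d²` variables `x_{i,j}`. -/
noncomputable def perd (k : Type*) [CommRing k] (d : ℕ) : MvPolynomial (Fin d × Fin d) k :=
  ∑ σ : Equiv.Perm (Fin d), ∏ i : Fin d, X (i, σ i)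

/-- The apolarity action: `diffAction θ F` is the result `θ ∘ F` of applying the
constant-coefficient differential operator obtained from `θ` by substituting
`y_{i,j} ↦ ∂/∂x_{i,j}` to the polynomial `F`. -/
noncomputable def diffAction {k : Type*} [CommSemiring k] {σ : Type*}
    (θ F : MvPolynomial σ k) : MvPolynomial σ k :=
  ∑ a ∈ θ.support, ∑ b ∈ F.support,
    monomial (b - a) (θ.coeff a * F.coeff b * ∏ i ∈ a.support, ((b i).descFactorial (a i) : k))

open Finset

theorem disjoint_image_of_injOn {γ δ : Type*} [DecidableEq γ] [DecidableEq δ] {S T : Finset γ}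
    {f : γ → δ} (hf : Set.InjOn f ↑(S ∪ T)) (h : Disjoint S T) :
    Disjoint (S.image f) (T.image f) := by
  simp only [disjoint_left, mem_image, not_exists, not_and]
  rintro _ ⟨p, hp, rfl⟩ q hq hqp
  exact disjoint_left.1 h hp (hf (by simp [hq]) (by simp [hp]) hqp ▸ hq)

section Apolarity

variable {σ k : Type*} [CommSemiring k]

/-- `∂^a x^b = descFactorialProd a b • x^(b - a)`; the factor vanishes unless `a ≤ b`, so the
truncated subtraction `b - a` does no harm. -/
def descFactorialProd (a b : σ →₀ ℕ) : ℕ :=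
  a.prod fun i n => (b i).descFactorial n

theorem descFactorialProd_eq_zero_of_not_le {a b : σ →₀ ℕ} (h : ¬a ≤ b) :
    descFactorialProd a b = 0 := by
  obtain ⟨i, hi⟩ : ∃ i, b i < a i := by simpa [Finsupp.le_def] using h
  exact prod_eq_zero (Finsupp.mem_support_iff.2 (by omega)) (Nat.descFactorial_eq_zero_iff_lt.2 hi)

theorem descFactorialProd_mul (a b c : σ →₀ ℕ) :
    descFactorialProd a (c + a) * descFactorialProd b (c + a + b) =
      descFactorialProd (a + b) (c + a + b) := by
  classical
  have extend (f x : σ →₀ ℕ) (hf : f ≤ a + b) :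
      descFactorialProd f x = ∏ i ∈ (a + b).support, (x i).descFactorial (f i) :=
    Finsupp.prod_of_support_subset f (Finsupp.support_mono hf) _ fun _ _ => Nat.descFactorial_zero _
  rw [extend a _ le_self_add, extend b _ le_add_self, extend (a + b) _ le_rfl, ← prod_mul_distrib]
  refine prod_congr rfl fun i _ => ?_
  simpa using Nat.descFactorial_mul_descFactorial (n := c i + a i + b i) (k := b i) (m := a i + b i)
    le_add_self

noncomputable def monomialDeriv (a : σ →₀ ℕ) (F : MvPolynomial σ k) : MvPolynomial σ k :=
  ∑ b ∈ F.support, monomial (b - a) ((descFactorialProd a b : k) * F.coeff b)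

theorem coeff_monomialDeriv (a c : σ →₀ ℕ) (F : MvPolynomial σ k) :
    (monomialDeriv a F).coeff c = descFactorialProd a (c + a) * F.coeff (c + a) := by
  classical
  rw [monomialDeriv, coeff_sum, sum_eq_single (c + a)]
  · simp [coeff_monomial]
  · intro b _ hb
    rw [coeff_monomial]
    split_ifs with h
    · subst h
      rw [descFactorialProd_eq_zero_of_not_le fun hab => hb (tsub_add_cancel_of_le hab).symm,
        Nat.cast_zero, zero_mul]
    · rfl
  · intro h
    simp [notMem_support_iff.1 h]

theorem monomialDeriv_add (a : σ →₀ ℕ) (F G : MvPolynomial σ k) :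
    monomialDeriv a (F + G) = monomialDeriv a F + monomialDeriv a G := by
  ext c
  simp [coeff_monomialDeriv, mul_add]

theorem monomialDeriv_smul (a : σ →₀ ℕ) (r : k) (F : MvPolynomial σ k) :
    monomialDeriv a (r • F) = r • monomialDeriv a F := by
  ext c
  simp only [coeff_monomialDeriv, coeff_smul, smul_eq_mul]
  ring

theorem monomialDeriv_monomialDeriv (a b : σ →₀ ℕ) (F : MvPolynomial σ k) :
    monomialDeriv a (monomialDeriv b F) = monomialDeriv (a + b) F := by
  ext c
  rw [coeff_monomialDeriv, coeff_monomialDeriv, coeff_monomialDeriv, ← mul_assoc, ← Nat.cast_mul,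
    descFactorialProd_mul, add_assoc]

theorem diffAction_eq_sum {θ : MvPolynomial σ k} {s : Finset (σ →₀ ℕ)} (hs : θ.support ⊆ s)
    (F : MvPolynomial σ k) : diffAction θ F = ∑ a ∈ s, θ.coeff a • monomialDeriv a F := by
  rw [← sum_subset hs fun a _ ha => by rw [notMem_support_iff.1 ha, zero_smul]]
  refine sum_congr rfl fun a _ => ?_
  rw [monomialDeriv, smul_sum]
  refine sum_congr rfl fun b _ => ?_
  rw [smul_monomial, descFactorialProd, Finsupp.prod, Nat.cast_prod, smul_eq_mul]
  ring_nf

theorem diffAction_add_left (θ ψ F : MvPolynomial σ k) :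
    diffAction (θ + ψ) F = diffAction θ F + diffAction ψ F := by
  classical
  rw [diffAction_eq_sum support_add, diffAction_eq_sum subset_union_left,
    diffAction_eq_sum subset_union_right, ← sum_add_distrib]
  simp only [coeff_add, add_smul]

theorem diffAction_monomial (a : σ →₀ ℕ) (r : k) (F : MvPolynomial σ k) :
    diffAction (monomial a r) F = r • monomialDeriv a F := by
  classical
  rw [diffAction_eq_sum support_monomial_subset, sum_singleton, coeff_monomial, if_pos rfl]

theorem diffAction_mul (θ ψ F : MvPolynomial σ k) :
    diffAction (θ * ψ) F = diffAction θ (diffAction ψ F) := by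
  induction θ using MvPolynomial.induction_on' with
  | add θ₁ θ₂ ih₁ ih₂ => rw [add_mul, diffAction_add_left, ih₁, ih₂, diffAction_add_left]
  | monomial a r =>
    induction ψ using MvPolynomial.induction_on' with
    | add ψ₁ ψ₂ ih₁ ih₂ =>
      rw [mul_add, diffAction_add_left, ih₁, ih₂, diffAction_add_left (θ := ψ₁),
        diffAction_monomial, diffAction_monomial, diffAction_monomial, monomialDeriv_add, smul_add]
    | monomial b s =>
      rw [monomial_mul, diffAction_monomial, diffAction_monomial, diffAction_monomial,
        monomialDeriv_smul, monomialDeriv_monomialDeriv, smul_smul]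

theorem diffAction_zero_left (F : MvPolynomial σ k) : diffAction 0 F = 0 := by
  simpa using diffAction_monomial 0 (0 : k) F

theorem diffAction_zero_right (θ : MvPolynomial σ k) : diffAction θ 0 = 0 := by
  simp [diffAction]

noncomputable def apolarIdeal (F : MvPolynomial σ k) : Ideal (MvPolynomial σ k) where
  carrier := {θ | diffAction θ F = 0}
  add_mem' {θ ψ} (hθ : diffAction θ F = 0) (hψ : diffAction ψ F = 0) := by
    rw [Set.mem_ofPred_eq, diffAction_add_left, hθ, hψ, add_zero]
  zero_mem' := diffAction_zero_left F
  smul_mem' θ ψ (hψ : diffAction ψ F = 0) := by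
    rw [Set.mem_ofPred_eq, smul_eq_mul, diffAction_mul, hψ, diffAction_zero_right]

theorem mem_apolarIdeal {F θ : MvPolynomial σ k} : θ ∈ apolarIdeal F ↔ diffAction θ F = 0 :=
  Iff.rfl

theorem diffAction_sub {R : Type*} [CommRing R] (θ ψ F : MvPolynomial σ R) :
    diffAction (θ - ψ) F = diffAction θ F - diffAction ψ F :=
  eq_sub_of_add_eq (by rw [← diffAction_add_left, sub_add_cancel])

end Apolarity

section RookPlacement

variable {α β : Type*}

def IsRook (S : Finset (α × β)) : Prop :=
  Set.InjOn Prod.fst (S : Set (α × β)) ∧ Set.InjOn Prod.snd (S : Set (α × β))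

theorem IsRook.mono {S T : Finset (α × β)} (hS : IsRook S) (h : T ⊆ S) : IsRook T :=
  ⟨hS.1.mono (coe_subset.2 h), hS.2.mono (coe_subset.2 h)⟩

variable [DecidableEq α] [DecidableEq β]

theorem IsRook.union {S T : Finset (α × β)} (hS : IsRook S) (hT : IsRook T)
    (hr : Disjoint (S.image Prod.fst) (T.image Prod.fst))
    (hc : Disjoint (S.image Prod.snd) (T.image Prod.snd)) : IsRook (S ∪ T) := by
  have hST : Disjoint (S : Set (α × β)) T := disjoint_coe.2 hr.of_image_finset
  rw [IsRook, coe_union, Set.injOn_union hST, Set.injOn_union hST]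
  exact ⟨⟨hS.1, hT.1, fun p hp q hq =>
      hr.forall_ne_finset (mem_image_of_mem _ hp) (mem_image_of_mem _ hq)⟩,
    ⟨hS.2, hT.2, fun p hp q hq =>
      hc.forall_ne_finset (mem_image_of_mem _ hp) (mem_image_of_mem _ hq)⟩⟩

theorem image_image_fst_eq_self {S : Finset (α × β)} {f : α → β} (hf : ∀ p ∈ S, f p.1 = p.2) :
    (S.image Prod.fst).image (fun i => (i, f i)) = S := by
  ext q
  simp only [image_image, mem_image, Function.comp_apply]
  constructor
  · rintro ⟨p, hp, rfl⟩
    rwa [hf p hp]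
  · exact fun hq => ⟨q, hq, by rw [hf q hq]⟩

theorem prod_eq_prod_image_fst {M : Type*} [CommMonoid M] {S : Finset (α × β)} {f : α → β}
    (hf : ∀ p ∈ S, f p.1 = p.2) (x : α × β → M) :
    ∏ p ∈ S, x p = ∏ i ∈ S.image Prod.fst, x (i, f i) := by
  conv_lhs => rw [← image_image_fst_eq_self hf]
  exact prod_image fun i _ j _ h => (Prod.ext_iff.1 h).1

theorem image_snd_eq_image_fst {S : Finset (α × β)} {f : α → β} (hf : ∀ p ∈ S, f p.1 = p.2) :
    S.image Prod.snd = (S.image Prod.fst).image f := by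
  conv_lhs => rw [← image_image_fst_eq_self hf]
  rw [image_image]
  rfl

theorem IsRook.exists_perm {S : Finset (α × α)} (hS : IsRook S) :
    ∃ σ : Equiv.Perm α, ∀ p ∈ S, σ p.1 = p.2 := by
  induction S using Finset.induction_on with
  | empty => exact ⟨1, by simp⟩
  | insert p S hp ih =>
    obtain ⟨σ, hσ⟩ := ih (hS.mono (subset_insert p S))
    refine ⟨Equiv.swap (σ p.1) p.2 * σ, (forall_mem_insert _ _ _).2 ⟨by simp, fun q hq => ?_⟩⟩
    have hqp : q ≠ p := ne_of_mem_of_not_mem hq hp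
    have hq' : q ∈ (↑(insert p S) : Set (α × α)) := by simp [hq]
    have hp' : p ∈ (↑(insert p S) : Set (α × α)) := by simp
    rw [Equiv.Perm.mul_apply, hσ q hq, Equiv.swap_apply_of_ne_of_ne]
    · rw [← hσ q hq]
      exact σ.injective.ne (hS.1.ne hq' hp' hqp)
    · exact hS.2.ne hq' hp' hqp

end RookPlacement

section Exchange

variable {α β M : Type*} [DecidableEq α] [CommMonoid M]

theorem image_swap_of_mem {s : Finset α} {a b : α} (ha : a ∈ s) (hb : b ∈ s) :
    s.image (Equiv.swap a b) = s := by
  simpa [map_eq_image] using map_perm (s := s) (σ := Equiv.swap a b) fun i hi => by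
    obtain ⟨-, rfl | rfl⟩ := Equiv.swap_apply_ne_self_iff.1 hi <;> assumption

theorem prod_swap_eq_of_exchange {x : α × β → M}
    (hx : ∀ i k j l, x (i, j) * x (k, l) = x (i, l) * x (k, j))
    {R : Finset α} {a b : α} (ha : a ∈ R) (hb : b ∈ R) (g : α → β) :
    ∏ i ∈ R, x (i, g (Equiv.swap a b i)) = ∏ i ∈ R, x (i, g i) := by
  rcases eq_or_ne a b with rfl | hab
  · simp
  have hb' : b ∈ R.erase a := mem_erase.2 ⟨hab.symm, hb⟩
  have hrest : ∀ i ∈ (R.erase a).erase b, x (i, g (Equiv.swap a b i)) = x (i, g i) := by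
    intro i hi
    obtain ⟨hib, hia, -⟩ : i ≠ b ∧ i ≠ a ∧ i ∈ R := by simpa using hi
    rw [Equiv.swap_apply_of_ne_of_ne hia hib]
  calc ∏ i ∈ R, x (i, g (Equiv.swap a b i))
      = x (a, g b) * x (b, g a) * ∏ i ∈ (R.erase a).erase b, x (i, g i) := by
        rw [← mul_prod_erase R _ ha, ← mul_prod_erase _ _ hb', prod_congr rfl hrest,
          Equiv.swap_apply_left, Equiv.swap_apply_right, mul_assoc]
    _ = x (a, g a) * x (b, g b) * ∏ i ∈ (R.erase a).erase b, x (i, g i) := by rw [hx]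
    _ = ∏ i ∈ R, x (i, g i) := by
        rw [mul_assoc, mul_prod_erase _ (fun i => x (i, g i)) hb',
          mul_prod_erase R (fun i => x (i, g i)) ha]

theorem prod_eq_prod_of_image_eq [DecidableEq β] {x : α × β → M}
    (hx : ∀ i k j l, x (i, j) * x (k, l) = x (i, l) * x (k, j))
    {R : Finset α} {f g : α ≃ β} (h : R.image f = R.image g) :
    ∏ i ∈ R, x (i, f i) = ∏ i ∈ R, x (i, g i) := by
  induction R using Finset.induction_on generalizing g with
  | empty => rfl
  | insert a R ha ih =>
    -- one exchange moves the column `f a` from row `b` to row `a`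
    obtain ⟨b, hb, hgb⟩ : ∃ b ∈ insert a R, g b = f a :=
      mem_image.1 (h ▸ mem_image_of_mem f (mem_insert_self a R))
    set g' := (Equiv.swap a b).trans g
    have hg'a : g' a = f a := by simp [g', hgb]
    have himage : (insert a R).image g' = (insert a R).image g := by
      rw [Equiv.coe_trans, ← image_image, image_swap_of_mem (mem_insert_self a R) hb]
    have herase (e : α ≃ β) : R.image e = ((insert a R).image e).erase (e a) := by
      rw [image_insert, erase_insert (e.injective.mem_finset_image.not.2 ha)]
    calc ∏ i ∈ insert a R, x (i, f i) = ∏ i ∈ insert a R, x (i, g' i) := by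
          rw [prod_insert ha, prod_insert ha, hg'a,
            ih (g := g') (by rw [herase f, herase g', h, ← himage, hg'a])]
      _ = ∏ i ∈ insert a R, x (i, g i) := prod_swap_eq_of_exchange hx (mem_insert_self a R) hb g

theorem IsRook.prod_eq_prod_of_exchange {x : α × α → M}
    (hx : ∀ i k j l, x (i, j) * x (k, l) = x (i, l) * x (k, j)) {S T : Finset (α × α)}
    (hS : IsRook S) (hT : IsRook T) (hr : S.image Prod.fst = T.image Prod.fst)
    (hc : S.image Prod.snd = T.image Prod.snd) : ∏ p ∈ S, x p = ∏ p ∈ T, x p := by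
  obtain ⟨σ, hσ⟩ := hS.exists_perm
  obtain ⟨τ, hτ⟩ := hT.exists_perm
  rw [prod_eq_prod_image_fst hσ, prod_eq_prod_image_fst hτ, hr]
  refine prod_eq_prod_of_image_eq hx ?_
  rw [← hr, ← image_snd_eq_image_fst hσ, hc, hr, image_snd_eq_image_fst hτ]

end Exchange

section IndicatorExp

variable {ι : Type*}

noncomputable def indicatorExp (S : Finset ι) : ι →₀ ℕ :=
  ∑ p ∈ S, Finsupp.single p 1

theorem monomial_indicatorExp {R : Type*} [CommSemiring R] (S : Finset ι) :
    monomial (indicatorExp S) (1 : R) = ∏ p ∈ S, X p :=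
  monomial_sum_one S _

variable [DecidableEq ι]

theorem indicatorExp_apply (S : Finset ι) (p : ι) :
    indicatorExp S p = if p ∈ S then 1 else 0 := by
  simp [indicatorExp, Finsupp.finsetSum_apply, Finsupp.single_apply]

theorem support_indicatorExp (S : Finset ι) : (indicatorExp S).support = S := by
  ext p
  simp [indicatorExp_apply]

theorem indicatorExp_injective : Function.Injective (indicatorExp (ι := ι)) := fun S T h => by
  rw [← support_indicatorExp S, h, support_indicatorExp]

theorem indicatorExp_mono {S T : Finset ι} (h : S ⊆ T) : indicatorExp S ≤ indicatorExp T :=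
  fun p => by
    rw [indicatorExp_apply, indicatorExp_apply]
    by_cases hp : p ∈ S
    · rw [if_pos hp, if_pos (h hp)]
    · rw [if_neg hp]
      exact Nat.zero_le _

theorem indicatorExp_union {S T : Finset ι} (h : Disjoint S T) :
    indicatorExp (S ∪ T) = indicatorExp S + indicatorExp T :=
  sum_union h

theorem indicatorExp_add_eq_iff {S T G : Finset ι} :
    indicatorExp S + indicatorExp T = indicatorExp G ↔ Disjoint S T ∧ S ∪ T = G := by
  refine ⟨fun h => ?_, fun ⟨hST, hG⟩ => by rw [← hG, indicatorExp_union hST]⟩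
  have hST : Disjoint S T := disjoint_left.2 fun p hS hT => by
    have := DFunLike.congr_fun h p
    simp only [Finsupp.add_apply, indicatorExp_apply, if_pos hS, if_pos hT] at this
    split_ifs at this
    omega
  exact ⟨hST, indicatorExp_injective (by rw [indicatorExp_union hST, h])⟩

theorem indicatorExp_support_of_le_one {a : ι →₀ ℕ} (h : ∀ p, a p ≤ 1) :
    indicatorExp a.support = a := by
  ext p
  have := h p
  simp only [indicatorExp_apply, Finsupp.mem_support_iff]
  split_ifs <;> omega

theorem exists_indicatorExp_eq_of_le {a : ι →₀ ℕ} {G : Finset ι} (h : a ≤ indicatorExp G) :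
    ∃ S ⊆ G, indicatorExp S = a := by
  have hle (p : ι) : a p ≤ if p ∈ G then 1 else 0 := indicatorExp_apply G p ▸ h p
  refine ⟨a.support, fun p hp => ?_, indicatorExp_support_of_le_one fun p => ?_⟩
  · have := hle p
    rw [Finsupp.mem_support_iff] at hp
    split_ifs at this with hpG
    · exact hpG
    · omega
  · have := hle p
    split_ifs at this <;> omega

theorem descFactorialProd_indicatorExp (S : Finset ι) (b : ι →₀ ℕ) :
    descFactorialProd (indicatorExp S) b = ∏ p ∈ S, b p := by
  rw [descFactorialProd, Finsupp.prod, support_indicatorExp]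
  refine prod_congr rfl fun p hp => ?_
  rw [indicatorExp_apply, if_pos hp, Nat.descFactorial_one]

theorem X_mul_X_eq_monomial {R : Type*} [CommSemiring R] {p q : ι} (h : p ≠ q) :
    (X p * X q : MvPolynomial ι R) = monomial (indicatorExp {p, q}) 1 := by
  rw [monomial_indicatorExp, prod_pair h]

end IndicatorExp

section RookExp

variable {α β : Type*} [DecidableEq α] [DecidableEq β]

def IsRookExp (a : α × β →₀ ℕ) : Prop :=
  ∃ S, IsRook S ∧ indicatorExp S = a

theorem isRookExp_indicatorExp_iff {S : Finset (α × β)} : IsRookExp (indicatorExp S) ↔ IsRook S :=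
  ⟨fun ⟨_, hT, h⟩ => indicatorExp_injective h ▸ hT, fun hS => ⟨S, hS, rfl⟩⟩

theorem IsRook.isRookExp_of_le {G : Finset (α × β)} (hG : IsRook G) {a : α × β →₀ ℕ}
    (h : a ≤ indicatorExp G) : IsRookExp a :=
  let ⟨S, hSG, hS⟩ := exists_indicatorExp_eq_of_le h
  ⟨S, hG.mono hSG, hS⟩

theorem exists_ne_of_not_isRook {S : Finset (α × β)} (h : ¬IsRook S) :
    ∃ p ∈ S, ∃ q ∈ S, p ≠ q ∧ (p.1 = q.1 ∨ p.2 = q.2) := by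
  by_contra! h'
  exact h ⟨fun p hp q hq hpq => by_contra fun hne => (h' p hp q hq hne).1 hpq,
    fun p hp q hq hpq => by_contra fun hne => (h' p hp q hq hne).2 hpq⟩

theorem isRook_pair_iff {p q : α × β} : IsRook {p, q} ↔ (p.1 = q.1 ∨ p.2 = q.2 → p = q) := by
  simp only [IsRook, coe_pair, Set.injOn_pair]
  tauto

theorem not_isRookExp_single_two (p : α × β) : ¬IsRookExp (Finsupp.single p 2) := by
  rintro ⟨S, -, h⟩
  have := DFunLike.congr_fun h p
  rw [indicatorExp_apply, Finsupp.single_eq_same] at this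
  split_ifs at this
  omega

end RookExp

section PermGraph

variable {α : Type*} [DecidableEq α] [Fintype α]

def permGraph (σ : Equiv.Perm α) : Finset (α × α) :=
  univ.image fun i => (i, σ i)

theorem isRook_permGraph (σ : Equiv.Perm α) : IsRook (permGraph σ) := by
  constructor <;> rintro _ hp _ hq h <;>
    obtain ⟨i, -, rfl⟩ := mem_image.1 (mem_coe.1 hp) <;>
    obtain ⟨j, -, rfl⟩ := mem_image.1 (mem_coe.1 hq)
  · rw [show i = j from h]
  · rw [σ.injective h]

theorem image_fst_permGraph (σ : Equiv.Perm α) : (permGraph σ).image Prod.fst = univ := by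
  simp [permGraph, image_image, Function.comp_def]

theorem image_snd_permGraph (σ : Equiv.Perm α) : (permGraph σ).image Prod.snd = univ := by
  simp [permGraph, image_image, Function.comp_def, image_univ_equiv]

theorem permGraph_injective : Function.Injective (permGraph (α := α)) := fun σ τ h => by
  ext i
  have : (i, σ i) ∈ permGraph τ := h ▸ mem_image_of_mem _ (mem_univ i)
  obtain ⟨j, -, hj⟩ := mem_image.1 this
  simp only [Prod.mk.injEq] at hj
  obtain ⟨rfl, hj⟩ := hj
  exact hj.symm

theorem subset_permGraph {S : Finset (α × α)} {σ : Equiv.Perm α} (hσ : ∀ p ∈ S, σ p.1 = p.2) :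
    S ⊆ permGraph σ := fun p hp => mem_image.2 ⟨p.1, mem_univ _, by rw [hσ p hp]⟩

theorem exists_permGraph_iff_isCompl {S T : Finset (α × α)} (hS : IsRook S) (hT : IsRook T) :
    (∃ σ : Equiv.Perm α, indicatorExp S + indicatorExp T = indicatorExp (permGraph σ)) ↔
      IsCompl (S.image Prod.fst) (T.image Prod.fst) ∧
        IsCompl (S.image Prod.snd) (T.image Prod.snd) := by
  simp only [indicatorExp_add_eq_iff, isCompl_iff, codisjoint_iff, sup_eq_union, top_eq_univ,
    ← image_union]
  constructor
  · rintro ⟨σ, hST, hG⟩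
    have hrook : IsRook (S ∪ T) := hG ▸ isRook_permGraph σ
    exact ⟨⟨disjoint_image_of_injOn hrook.1 hST, hG ▸ image_fst_permGraph σ⟩,
      ⟨disjoint_image_of_injOn hrook.2 hST, hG ▸ image_snd_permGraph σ⟩⟩
  · rintro ⟨⟨hr, hr'⟩, hc, -⟩
    obtain ⟨σ, hσ⟩ := (hS.union hT hr hc).exists_perm
    refine ⟨σ, hr.of_image_finset, ?_⟩
    rw [← image_image_fst_eq_self hσ, hr']
    rfl

theorem IsRook.exists_isCompl {S : Finset (α × α)} (hS : IsRook S) :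
    ∃ T, IsRook T ∧ IsCompl (S.image Prod.fst) (T.image Prod.fst) ∧
      IsCompl (S.image Prod.snd) (T.image Prod.snd) := by
  obtain ⟨σ, hσ⟩ := hS.exists_perm
  have hT : IsRook (permGraph σ \ S) := (isRook_permGraph σ).mono sdiff_subset
  refine ⟨_, hT, (exists_permGraph_iff_isCompl hS hT).1 ⟨σ, ?_⟩⟩
  exact indicatorExp_add_eq_iff.2 ⟨disjoint_sdiff, union_sdiff_of_subset (subset_permGraph hσ)⟩

end PermGraph

section Permanent

variable {k : Type*} [CommRing k] {d : ℕ}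

theorem perd_eq_sum : perd k d = ∑ σ, monomial (indicatorExp (permGraph σ)) 1 := by
  refine sum_congr rfl fun σ _ => ?_
  rw [monomial_indicatorExp, permGraph, prod_image fun i _ j _ h => (Prod.ext_iff.1 h).1]

open Classical in
theorem coeff_perd (a : Fin d × Fin d →₀ ℕ) :
    (perd k d).coeff a = if ∃ σ, a = indicatorExp (permGraph σ) then 1 else 0 := by
  simp only [perd_eq_sum, coeff_sum, coeff_monomial]
  split_ifs with h
  · obtain ⟨σ, rfl⟩ := h
    rw [sum_eq_single σ (fun τ _ hτ => if_neg fun h => hτ (permGraph_injective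
      (indicatorExp_injective h))) (by simp), if_pos rfl]
  · exact sum_eq_zero fun σ _ => if_neg fun h' => h ⟨σ, h'.symm⟩

theorem coeff_monomialDeriv_perd_eq_zero {a c : Fin d × Fin d →₀ ℕ}
    (h : ¬(IsRookExp a ∧ IsRookExp c)) : (monomialDeriv a (perd k d)).coeff c = 0 := by
  rw [coeff_monomialDeriv, coeff_perd, if_neg, mul_zero]
  rintro ⟨σ, hσ⟩
  exact h ⟨(isRook_permGraph σ).isRookExp_of_le (hσ ▸ le_add_self),
    (isRook_permGraph σ).isRookExp_of_le (hσ ▸ le_self_add)⟩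

theorem monomialDeriv_perd_eq_zero {a : Fin d × Fin d →₀ ℕ} (ha : ¬IsRookExp a) :
    monomialDeriv a (perd k d) = 0 := by
  ext c
  rw [coeff_monomialDeriv_perd_eq_zero fun h => ha h.1, coeff_zero]

open Classical in
theorem coeff_monomialDeriv_perd {S T : Finset (Fin d × Fin d)} (hS : IsRook S) (hT : IsRook T) :
    (monomialDeriv (indicatorExp S) (perd k d)).coeff (indicatorExp T) =
      if IsCompl (S.image Prod.fst) (T.image Prod.fst) ∧
        IsCompl (S.image Prod.snd) (T.image Prod.snd) then 1 else 0 := by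
  rw [coeff_monomialDeriv, add_comm, coeff_perd]
  by_cases h : IsCompl (S.image Prod.fst) (T.image Prod.fst) ∧
    IsCompl (S.image Prod.snd) (T.image Prod.snd)
  · obtain ⟨σ, hσ⟩ := (exists_permGraph_iff_isCompl hS hT).2 h
    have hSσ : S ⊆ permGraph σ := (indicatorExp_add_eq_iff.1 hσ).2 ▸ subset_union_left
    rw [if_pos ⟨σ, hσ⟩, if_pos h, hσ, descFactorialProd_indicatorExp,
      prod_eq_one fun p hp => by rw [indicatorExp_apply, if_pos (hSσ hp)], Nat.cast_one, mul_one]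
  · rw [if_neg fun ⟨σ, hσ⟩ => h ((exists_permGraph_iff_isCompl hS hT).1 ⟨σ, hσ⟩), if_neg h,
      mul_zero]

theorem monomialDeriv_perd_congr {S S' : Finset (Fin d × Fin d)} (hS : IsRook S)
    (hS' : IsRook S') (hr : S.image Prod.fst = S'.image Prod.fst)
    (hc : S.image Prod.snd = S'.image Prod.snd) :
    monomialDeriv (indicatorExp S) (perd k d) = monomialDeriv (indicatorExp S') (perd k d) := by
  ext c
  by_cases hc' : IsRookExp c
  · obtain ⟨T, hT, rfl⟩ := hc'
    rw [coeff_monomialDeriv_perd hS hT, coeff_monomialDeriv_perd hS' hT, hr, hc]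
  · rw [coeff_monomialDeriv_perd_eq_zero fun h => hc' h.2,
      coeff_monomialDeriv_perd_eq_zero fun h => hc' h.2]

open Classical in
theorem coeff_diffAction_perd {T : Finset (Fin d × Fin d)} (hT : IsRook T)
    (θ : MvPolynomial (Fin d × Fin d) k) :
    (diffAction θ (perd k d)).coeff (indicatorExp T) =
      ∑ S with IsRook S ∧ IsCompl (S.image Prod.fst) (T.image Prod.fst) ∧
        IsCompl (S.image Prod.snd) (T.image Prod.snd), θ.coeff (indicatorExp S) := by
  induction θ using MvPolynomial.induction_on' with
  | add θ ψ hθ hψ =>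
    simp only [diffAction_add_left, coeff_add, hθ, hψ, sum_add_distrib]
  | monomial a r =>
    rw [diffAction_monomial, coeff_smul, smul_eq_mul]
    simp only [coeff_monomial]
    by_cases ha : IsRookExp a
    · obtain ⟨S₀, hS₀, rfl⟩ := ha
      simp only [indicatorExp_injective.eq_iff, sum_ite_eq, mem_filter, mem_univ, true_and,
        coeff_monomialDeriv_perd hS₀ hT, hS₀, mul_ite, mul_one, mul_zero]
    · rw [monomialDeriv_perd_eq_zero ha, coeff_zero, mul_zero]
      exact (sum_eq_zero fun S hS => if_neg fun h => ha ⟨S, (mem_filter.1 hS).2.1, h.symm⟩).symm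

end Permanent

section Quadrics

variable (k : Type*) [CommRing k] (d : ℕ)

def quadrics : Set (MvPolynomial (Fin d × Fin d) k) :=
  {p | ∃ i j : Fin d, p = X (i, j) ^ 2} ∪
    {p | ∃ (i j₁ j₂ : Fin d), j₁ ≠ j₂ ∧ p = X (i, j₁) * X (i, j₂)} ∪
    {p | ∃ (i₁ i₂ j : Fin d), i₁ ≠ i₂ ∧ p = X (i₁, j) * X (i₂, j)} ∪
    {p | ∃ (i k' j l : Fin d), i ≠ k' ∧ j ≠ l ∧
      p = X (i, j) * X (k', l) - X (i, l) * X (k', j)}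

variable {k d}

theorem span_quadrics_le_apolarIdeal : Ideal.span (quadrics k d) ≤ apolarIdeal (perd k d) := by
  have hmon {a : Fin d × Fin d →₀ ℕ} (ha : ¬IsRookExp a) :
      monomial a 1 ∈ apolarIdeal (perd k d) := by
    rw [mem_apolarIdeal, diffAction_monomial, monomialDeriv_perd_eq_zero ha, smul_zero]
  have hpair {p q : Fin d × Fin d} (hpq : p ≠ q) (h : p.1 = q.1 ∨ p.2 = q.2) :
      X p * X q ∈ apolarIdeal (perd k d) := by
    rw [X_mul_X_eq_monomial hpq]
    exact hmon (isRookExp_indicatorExp_iff.not.2 fun hr => hpq (isRook_pair_iff.1 hr h))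
  rw [Ideal.span_le]
  rintro g (((⟨i, j, rfl⟩ | ⟨i, j₁, j₂, hj, rfl⟩) | ⟨i₁, i₂, j, hi, rfl⟩) |
    ⟨i, i', j, j', hi, hj, rfl⟩)
  · rw [X_pow_eq_monomial]
    exact hmon (not_isRookExp_single_two _)
  · exact hpair (by simp [hj]) (Or.inl rfl)
  · exact hpair (by simp [hi]) (Or.inr rfl)
  · have hS : IsRook {(i, j), (i', j')} := isRook_pair_iff.2 fun h => by simp_all
    have hS' : IsRook {(i, j'), (i', j)} := isRook_pair_iff.2 fun h => by simp_all
    rw [SetLike.mem_coe, mem_apolarIdeal, diffAction_sub, X_mul_X_eq_monomial (by simp [hi]),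
      X_mul_X_eq_monomial (by simp [hi]), diffAction_monomial, diffAction_monomial,
      monomialDeriv_perd_congr hS hS' (by simp) (by simp [pair_comm]), sub_self]

theorem monomial_mem_span_quadrics {a : Fin d × Fin d →₀ ℕ} (ha : ¬IsRookExp a) (r : k) :
    monomial a r ∈ Ideal.span (quadrics k d) := by
  have hdvd {b : Fin d × Fin d →₀ ℕ} (hb : b ≤ a) (h : monomial b 1 ∈ quadrics k d) :
      monomial a r ∈ Ideal.span (quadrics k d) := by
    rw [← tsub_add_cancel_of_le hb, ← mul_one r, ← monomial_mul]
    exact Ideal.mul_mem_left _ _ (Ideal.subset_span h)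
  by_cases h2 : ∃ p, 2 ≤ a p
  · obtain ⟨p, hp⟩ := h2
    refine hdvd (Finsupp.single_le_iff.2 hp) (Or.inl (Or.inl (Or.inl ⟨p.1, p.2, ?_⟩)))
    rw [X_pow_eq_monomial]
  · simp only [not_exists, not_le] at h2
    have ha' : indicatorExp a.support = a := indicatorExp_support_of_le_one fun p => by
      have := h2 p
      omega
    obtain ⟨⟨i, j⟩, hp, ⟨i', j'⟩, hq, hpq, hrc⟩ := exists_ne_of_not_isRook fun h => ha ⟨_, h, ha'⟩
    refine hdvd (ha' ▸ indicatorExp_mono (insert_subset hp (singleton_subset_iff.2 hq))) ?_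
    rw [← X_mul_X_eq_monomial hpq]
    rcases hrc with rfl | rfl
    · exact Or.inl (Or.inl (Or.inr ⟨i, j, j', fun h => hpq (by rw [h]), rfl⟩))
    · exact Or.inl (Or.inr ⟨i, i', j, fun h => hpq (by rw [h]), rfl⟩)

theorem mkₐ_prod_X_eq_of_image_eq {S S' : Finset (Fin d × Fin d)} (hS : IsRook S)
    (hS' : IsRook S') (hr : S.image Prod.fst = S'.image Prod.fst)
    (hc : S.image Prod.snd = S'.image Prod.snd) :
    Ideal.Quotient.mkₐ k (Ideal.span (quadrics k d)) (∏ p ∈ S, X p) =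
      Ideal.Quotient.mkₐ k (Ideal.span (quadrics k d)) (∏ p ∈ S', X p) := by
  simp only [Ideal.Quotient.mkₐ_eq_mk, map_prod]
  refine hS.prod_eq_prod_of_exchange (fun i i' j j' => ?_) hS' hr hc
  rw [← map_mul, ← map_mul, Ideal.Quotient.eq]
  by_cases hi : i = i'
  · rw [hi, mul_comm, sub_self]
    exact zero_mem _
  by_cases hj : j = j'
  · rw [hj, sub_self]
    exact zero_mem _
  exact Ideal.subset_span (Or.inr ⟨i, i', j, j', hi, hj, rfl⟩)

open Classical in
theorem mkₐ_eq_sum_rook (θ : MvPolynomial (Fin d × Fin d) k) :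
    Ideal.Quotient.mkₐ k (Ideal.span (quadrics k d)) θ =
      ∑ S with IsRook S, θ.coeff (indicatorExp S) •
        Ideal.Quotient.mkₐ k (Ideal.span (quadrics k d)) (∏ p ∈ S, X p) := by
  induction θ using MvPolynomial.induction_on' with
  | add θ ψ hθ hψ => simp only [map_add, hθ, hψ, coeff_add, add_smul, sum_add_distrib]
  | monomial a r =>
    simp only [coeff_monomial, ite_smul, zero_smul]
    by_cases ha : IsRookExp a
    · obtain ⟨S₀, hS₀, rfl⟩ := ha
      simp only [indicatorExp_injective.eq_iff, sum_ite_eq, mem_filter, mem_univ, true_and,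
        if_pos hS₀, ← monomial_indicatorExp, ← map_smul, smul_eq_mul, mul_one]
    · rw [sum_eq_zero fun S hS => if_neg fun h => ha ⟨S, (mem_filter.1 hS).2, h.symm⟩,
        Ideal.Quotient.mkₐ_eq_mk, Ideal.Quotient.eq_zero_iff_mem]
      exact monomial_mem_span_quadrics ha r

open Classical in
theorem sum_coeff_rook_eq_zero {θ : MvPolynomial (Fin d × Fin d) k}
    (h : diffAction θ (perd k d) = 0) {S₀ : Finset (Fin d × Fin d)} (hS₀ : IsRook S₀) :
    ∑ S with IsRook S ∧ (S.image Prod.fst, S.image Prod.snd) =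
      (S₀.image Prod.fst, S₀.image Prod.snd), θ.coeff (indicatorExp S) = 0 := by
  obtain ⟨T, hT, hr, hc⟩ := hS₀.exists_isCompl
  have hT0 := coeff_diffAction_perd hT θ
  rw [h, coeff_zero] at hT0
  rw [hT0]
  refine sum_congr (filter_congr fun S _ => ?_) fun _ _ => rfl
  rw [Prod.mk.injEq]
  exact and_congr_right fun _ => and_congr ⟨fun h' => h' ▸ hr, fun h' => h'.left_unique hr⟩
    ⟨fun h' => h' ▸ hc, fun h' => h'.left_unique hc⟩

open Classical in
theorem sum_rook_fiber_eq_zero {θ : MvPolynomial (Fin d × Fin d) k}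
    (h : diffAction θ (perd k d) = 0) (κ : Finset (Fin d) × Finset (Fin d)) :
    ∑ S with IsRook S ∧ (S.image Prod.fst, S.image Prod.snd) = κ, θ.coeff (indicatorExp S) •
      Ideal.Quotient.mkₐ k (Ideal.span (quadrics k d)) (∏ p ∈ S, X p) = 0 := by
  rcases ({S | IsRook S ∧ (S.image Prod.fst, S.image Prod.snd) = κ} :
    Finset (Finset (Fin d × Fin d))).eq_empty_or_nonempty with hκ | ⟨S₀, hmem⟩
  · rw [hκ, sum_empty]
  obtain ⟨hS₀, rfl⟩ := (mem_filter.1 hmem).2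
  rw [sum_congr rfl (g := fun S => θ.coeff (indicatorExp S) •
      Ideal.Quotient.mkₐ k (Ideal.span (quadrics k d)) (∏ p ∈ S₀, X p)) fun S hS => ?_,
    ← sum_smul, sum_coeff_rook_eq_zero h hS₀, zero_smul]
  obtain ⟨hS, hkey⟩ := (mem_filter.1 hS).2
  rw [Prod.mk.injEq] at hkey
  rw [mkₐ_prod_X_eq_of_image_eq hS hS₀ hkey.1 hkey.2]

end Quadrics

theorem per_apolar_ideal_gens_general (k : Type*) [Field k] (d : ℕ) :
    ∀ θ : MvPolynomial (Fin d × Fin d) k,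
      diffAction θ (perd k d) = 0 ↔
        θ ∈ Ideal.span
          ({p | ∃ i j : Fin d, p = X (i, j) ^ 2} ∪
           {p | ∃ (i j₁ j₂ : Fin d), j₁ ≠ j₂ ∧ p = X (i, j₁) * X (i, j₂)} ∪
           {p | ∃ (i₁ i₂ j : Fin d), i₁ ≠ i₂ ∧ p = X (i₁, j) * X (i₂, j)} ∪
           {p | ∃ (i k' j l : Fin d), i ≠ k' ∧ j ≠ l ∧
              p = X (i, j) * X (k', l) - X (i, l) * X (k', j)}) := by
  intro θ
  refine ⟨fun h => ?_, fun h => span_quadrics_le_apolarIdeal h⟩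
  change θ ∈ Ideal.span (quadrics k d)
  rw [← Ideal.Quotient.eq_zero_iff_mem, ← Ideal.Quotient.mkₐ_eq_mk k, mkₐ_eq_sum_rook,
    ← sum_fiberwise _ fun S => (S.image Prod.fst, S.image Prod.snd)]
  exact sum_eq_zero fun κ _ => by rw [filter_filter]; exact sum_rook_fiber_eq_zero h κ

/-- Shafiei's theorem: for `d ≥ 2`, over a field of characteristic 0, the apolar ideal of the
generic `d × d` permanent is generated by the quadrics: squares of variables, products of two
variables from the same row, products of two variables from the same column, and `2 × 2`
determinants of the matrix of dual variables. -/
theorem per_apolar_ideal_gens (k : Type*) [Field k] [CharZero k] (d : ℕ) (hd : 2 ≤ d) :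
    ∀ θ : MvPolynomial (Fin d × Fin d) k,
      diffAction θ (perd k d) = 0 ↔
        θ ∈ Ideal.span
          ({p | ∃ i j : Fin d, p = X (i, j) ^ 2} ∪
           {p | ∃ (i j₁ j₂ : Fin d), j₁ ≠ j₂ ∧ p = X (i, j₁) * X (i, j₂)} ∪
           {p | ∃ (i₁ i₂ j : Fin d), i₁ ≠ i₂ ∧ p = X (i₁, j) * X (i₂, j)} ∪
           {p | ∃ (i k' j l : Fin d), i ≠ k' ∧ j ≠ l ∧
              p = X (i, j) * X (k', l) - X (i, l) * X (k', j)}) :=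
  per_apolar_ideal_gens_general k d
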